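/- Let S_𝐭 = (S_{1,t₁},…,S_{d,t_d}) be a commuting d-tuple of weighted translation operators with t₁,…,t_d > 0 and set t_r = min{t₁,…,t_d}. For each i ∈ ℕ, the joint kernel ⋂_{j=1}^d ker (S_{j,t_j}^*)^i equals { f ∈ L²(ℝ₊) : f = 0 a.e. on [i t_r, ∞) }, and the union over all i ∈ ℕ of these joint kernels is dense in L²(ℝ₊). -/

import Mathlib

open MeasureTheory Set ContinuousLinearMap

noncomputable section

namespace WTS

/-- Lebesgue measure restricted to `ℝ₊ = [0, ∞)`. -/
def mu : Measure ℝ := volume.restrict (Set.Ici (0 : ℝ))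

/-- The complex Hilbert space `L²(ℝ₊)`. -/
abbrev H : Type := Lp ℂ 2 mu

/-- A symbol: a function `φ` that is continuous and positive on `ℝ₊ = [0, ∞)`. -/
structure IsSymbol (φ : ℝ → ℝ) : Prop where
  cont : ContinuousOn φ (Set.Ici 0)
  pos : ∀ x ∈ Set.Ici (0 : ℝ), 0 < φ x

/-- The weight function `φ_t(x) = √(φ(x)/φ(x−t))` for `x ≥ t`, and `0` for `x < t`. -/
def wt (φ : ℝ → ℝ) (t : ℝ) (x : ℝ) : ℝ :=
  if t ≤ x then Real.sqrt (φ x / φ (x - t)) else 0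

/-- `S` is the weighted translation operator with symbol `φ` and translation `t`:
`(S f)(x) = φ_t(x) f(x−t)` for `x ≥ t` and `0` for `x < t`, where `φ_t` is essentially
bounded. -/
structure IsWT (φ : ℝ → ℝ) (t : ℝ) (S : H →L[ℂ] H) : Prop where
  bdd : ∃ C : ℝ, ∀ᵐ x ∂mu, wt φ t x ≤ C
  eval : ∀ f : H, ∀ᵐ x ∂mu,
    (S f : ℝ → ℂ) x = if t ≤ x then (wt φ t x : ℂ) * (f : ℝ → ℂ) (x - t) else 0

/-- `φ_t` is essentially bounded below by a positive constant on `[t, ∞)`;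
this is precisely left invertibility of the weighted translation operator. -/
def LowerBdd (φ : ℝ → ℝ) (t : ℝ) : Prop :=
  ∃ c : ℝ, 0 < c ∧ ∀ᵐ x ∂mu, t ≤ x → c ≤ wt φ t x

/-- `T` is the Cauchy dual of the weighted translation operator with symbol `φ` and
translation `t`: `(T f)(x) = φ_t(x)⁻¹ f(x−t)` for `x ≥ t` and `0` for `x < t`. -/
def IsWTDual (φ : ℝ → ℝ) (t : ℝ) (T : H →L[ℂ] H) : Prop :=
  ∀ f : H, ∀ᵐ x ∂mu,
    (T f : ℝ → ℂ) x = if t ≤ x then ((wt φ t x : ℂ))⁻¹ * (f : ℝ → ℂ) (x - t) else 0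

/-- The ordered product `S₁^{k₁} ⋯ S_d^{k_d}` of powers of a `d`-tuple of operators. -/
def tuplePow {d : ℕ} (S : Fin d → (H →L[ℂ] H)) (k : Fin d → ℕ) : H →L[ℂ] H :=
  (List.ofFn fun i => S i ^ k i).prod

/-- The joint kernel `E = ⋂ᵢ ker Sᵢ*` of the adjoint tuple. -/
def jointKer {d : ℕ} (S : Fin d → (H →L[ℂ] H)) : Set H :=
  {f : H | ∀ i, ContinuousLinearMap.adjoint (S i) f = 0}

end WTS

namespace WTS

/-!
On `[i t, ∞)` the power `S ^ i` acts as `(S ^ i g)(x) = W(x) g(x - i t)` with the positive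
continuous weight `W(x) = ∏_{k < i} φ_t(x - k t)`, and `S ^ i g` vanishes below `i t`. So
`ker (S*) ^ i = (ran S ^ i)^⊥` contains every `f` vanishing on `[i t, ∞)`; conversely, testing
`f` against `S ^ i g` for a suitable `g` gives `∫_{x ≥ i t} ρ |f|² = 0` with `ρ > 0`. For the
tuple, the smallest translation `t_r` gives the largest half-line, and the union of the joint
kernels contains the truncations `1_{[0, a)} f`, which tend to `f` in `L²` as `a → ∞`.
-/

open Filter Topology

theorem _root_.ContinuousLinearMap.adjoint_pow {𝕜 E : Type*} [RCLike 𝕜] [NormedAddCommGroup E]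
    [InnerProductSpace 𝕜 E] [CompleteSpace E] (A : E →L[𝕜] E) (n : ℕ) :
    adjoint (A ^ n) = adjoint A ^ n := by
  rw [← star_eq_adjoint, star_pow, star_eq_adjoint]

theorem _root_.MeasureTheory.Lp.tendsto_indicator_Iio_atTop {E : Type*} [NormedAddCommGroup E] {μ : Measure ℝ}
    {p : ENNReal} [Fact (1 ≤ p)] (hp : p ≠ ⊤) (f : Lp E p μ) :
    Tendsto (fun a : ℝ => ((Lp.memLp f).indicator (measurableSet_Iio (a := a))).toLp _)
      atTop (𝓝 f) := by
  have hp0 : p ≠ 0 := (zero_lt_one.trans_le Fact.out).ne'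
  have hp' : 0 < p.toReal := ENNReal.toReal_pos hp0 hp
  set ν := μ.withDensity fun x => ‖f x‖ₑ ^ p.toReal
  have hν : ∀ a, eLpNorm (⇑(((Lp.memLp f).indicator (measurableSet_Iio (a := a))).toLp _) - ⇑f) p μ
      = ν (Ici a) ^ (1 / p.toReal) := by
    intro a
    have htail : (Iio a).indicator f - f = -(Ici a).indicator f := by
      rw [← compl_Iio, indicator_compl]; abel
    rw [eLpNorm_congr_ae (((Lp.memLp f).indicator measurableSet_Iio).coeFn_toLp.sub .rfl),
      htail, eLpNorm_neg, eLpNorm_indicator_eq_eLpNorm_restrict measurableSet_Ici,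
      eLpNorm_eq_lintegral_rpow_enorm_toReal hp0 hp, withDensity_apply _ measurableSet_Ici]
  have hνfin : ν univ ≠ ⊤ := by
    rw [withDensity_apply _ MeasurableSet.univ, Measure.restrict_univ]
    exact (lintegral_rpow_enorm_lt_top_of_eLpNorm_lt_top hp0 hp (Lp.eLpNorm_lt_top f)).ne
  have hν0 : Tendsto (fun a => ν (Ici a)) atTop (𝓝 0) := by
    have := tendsto_measure_iInter_atTop (μ := ν) (fun a : ℝ => measurableSet_Ici.nullMeasurableSet)
      (fun a b hab => Ici_subset_Ici.mpr hab) ⟨0, measure_ne_top_of_subset (subset_univ _) hνfin⟩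
    have hempty : ⋂ a : ℝ, Ici a = ∅ :=
      eq_empty_of_forall_notMem fun x hx => (lt_add_one x).not_ge (mem_iInter.mp hx (x + 1))
    rwa [hempty, measure_empty] at this
  rw [Lp.tendsto_Lp_iff_tendsto_eLpNorm']
  simp_rw [hν]
  have := ((ENNReal.continuous_rpow_const (y := 1 / p.toReal)).tendsto 0).comp hν0
  rwa [ENNReal.zero_rpow_of_pos (one_div_pos.mpr hp')] at this

section L2

variable {α : Type*} [MeasurableSpace α] {μ : Measure α} {𝕜 : Type*} [RCLike 𝕜]

theorem _root_.MeasureTheory.L2.inner_eq_zero_of_ae_eq_zero_or {E : Type*} [NormedAddCommGroup E]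
    [InnerProductSpace 𝕜 E] {f g : Lp E 2 μ} (h : ∀ᵐ x ∂μ, f x = 0 ∨ g x = 0) :
    inner 𝕜 f g = 0 := by
  rw [L2.inner_def]
  refine integral_eq_zero_of_ae (h.mono fun x hx => ?_)
  rcases hx with hx | hx <;> simp [hx]

theorem _root_.MeasureTheory.L2.ae_eq_zero_of_inner_eq_zero_of_ae_eq_mul {f g : Lp 𝕜 2 μ} {w : α → ℝ}
    (hw : ∀ x, 0 ≤ w x) (hg : g =ᵐ[μ] fun x => (w x : 𝕜) * f x) (h : inner 𝕜 f g = 0) :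
    ∀ᵐ x ∂μ, w x ≠ 0 → f x = 0 := by
  set u : α → ℝ := fun x => w x * ‖f x‖ ^ 2
  have hfg : (fun x => inner 𝕜 (f x) (g x)) =ᵐ[μ] fun x => (u x : 𝕜) := by
    filter_upwards [hg] with x hx
    rw [hx, RCLike.inner_apply, mul_assoc, RCLike.mul_conj]
    simp [u]
  have hu : Integrable u μ := by
    simpa using ((L2.integrable_inner f g).congr hfg).re
  have hu0 : u =ᵐ[μ] 0 := by
    refine (integral_eq_zero_iff_of_nonneg (fun x => mul_nonneg (hw x) (sq_nonneg _)) hu).mp ?_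
    rw [L2.inner_def, integral_congr_ae hfg, integral_ofReal] at h
    exact_mod_cast h
  filter_upwards [hu0] with x hx hwx
  simpa [u, hwx] using hx

end L2

lemma ae_nonneg_mu : ∀ᵐ x ∂mu, 0 ≤ x := ae_restrict_mem measurableSet_Ici

lemma measurePreserving_add_const_mu (c : ℝ) :
    MeasurePreserving (· + c) mu (volume.restrict (Ici c)) := by
  refine ⟨measurable_add_const c, ?_⟩
  have hpre : (· + c) ⁻¹' Ici c = Ici (0 : ℝ) := by ext y; simp
  rw [mu, ← hpre, ← (measurableEmbedding_addRight c).restrict_map,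
    (measurePreserving_add_right volume c).map_eq]

lemma ae_sub_of_ae {P : ℝ → Prop} {c : ℝ} (hc : 0 ≤ c) (h : ∀ᵐ y ∂mu, P y) :
    ∀ᵐ x ∂mu, c ≤ x → P (x - c) := by
  have hshift : ∀ᵐ x ∂(volume.restrict (Ici c)), P (x - c) := by
    rw [← (measurePreserving_add_const_mu c).map_eq, (measurableEmbedding_addRight c).ae_map_iff]
    simpa using h
  have hrestrict : mu.restrict (Ici c) = volume.restrict (Ici c) := by
    rw [mu, Measure.restrict_restrict measurableSet_Ici,
      inter_eq_left.mpr (Ici_subset_Ici.mpr hc)]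
  exact ae_imp_of_ae_restrict (hrestrict ▸ hshift)

lemma memLp_comp_add_const {E : Type*} [NormedAddCommGroup E] {f : ℝ → E}
    {p : ENNReal} {c : ℝ} (hf : MemLp f p mu) (hc : 0 ≤ c) :
    MemLp (fun y => f (y + c)) p mu :=
  (hf.mono_measure (Measure.restrict_mono (Ici_subset_Ici.mpr hc) le_rfl)).comp_measurePreserving
    (measurePreserving_add_const_mu c)

lemma exists_Lp_eq_mul_comp_add_const {c C : ℝ} (hc : 0 ≤ c) {ρ : ℝ → ℝ}
    (hρ : ContinuousOn ρ (Ici c)) (hρC : ∀ x ∈ Ici c, |ρ x| ≤ C) (f : H) :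
    ∃ g : H, ∀ᵐ y ∂mu, (g : ℝ → ℂ) y = ρ (y + c) * (f : ℝ → ℂ) (y + c) := by
  have hf : MemLp (fun y => (f : ℝ → ℂ) (y + c)) 2 mu := memLp_comp_add_const (Lp.memLp f) hc
  have hρ' : ContinuousOn (fun y => (ρ (y + c) : ℂ)) (Ici 0) :=
    Complex.continuous_ofReal.comp_continuousOn <|
      hρ.comp (continuous_add_const c).continuousOn fun y hy => by simpa using hy
  have hg : MemLp (fun y => (ρ (y + c) : ℂ) * (f : ℝ → ℂ) (y + c)) 2 mu := by
    refine hf.of_le_mul (c := C) ((hρ'.aestronglyMeasurable measurableSet_Ici).mul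
      hf.aestronglyMeasurable) ?_
    filter_upwards [ae_nonneg_mu] with y hy
    rw [norm_mul, Complex.norm_real, Real.norm_eq_abs]
    exact mul_le_mul_of_nonneg_right (hρC _ (by simpa using hy)) (norm_nonneg _)
  exact ⟨hg.toLp _, hg.coeFn_toLp⟩

section Weights

variable {φ : ℝ → ℝ} {t : ℝ}

lemma wt_pos (hφ : IsSymbol φ) (ht : 0 ≤ t) {x : ℝ} (hx : t ≤ x) : 0 < wt φ t x := by
  rw [wt, if_pos hx]
  exact Real.sqrt_pos.mpr <|
    div_pos (hφ.pos x (ht.trans hx)) (hφ.pos _ (sub_nonneg.mpr hx))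

lemma wt_continuousOn (hφ : IsSymbol φ) (ht : 0 ≤ t) : ContinuousOn (wt φ t) (Ici t) := by
  have hsub : MapsTo (· - t) (Ici t) (Ici 0) := fun x hx => mem_Ici.mpr (sub_nonneg.mpr hx)
  have hquot : ContinuousOn (fun x => Real.sqrt (φ x / φ (x - t))) (Ici t) :=
    ((hφ.cont.mono (Ici_subset_Ici.mpr ht)).div
      (hφ.cont.comp (continuous_sub_right t).continuousOn hsub)
      fun x hx => (hφ.pos _ (hsub hx)).ne').sqrt
  exact hquot.congr fun x hx => if_pos hx

def wtProd (φ : ℝ → ℝ) (t : ℝ) (i : ℕ) (x : ℝ) : ℝ :=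
  ∏ k ∈ Finset.range i, wt φ t (x - k * t)

lemma le_sub_mul_of_lt (ht : 0 ≤ t) {i k : ℕ} (hk : k < i) {x : ℝ}
    (hx : (i : ℝ) * t ≤ x) : t ≤ x - k * t := by
  have : (k : ℝ) + 1 ≤ i := by exact_mod_cast hk
  nlinarith

lemma wtProd_pos (hφ : IsSymbol φ) (ht : 0 ≤ t) (i : ℕ) {x : ℝ} (hx : (i : ℝ) * t ≤ x) :
    0 < wtProd φ t i x :=
  Finset.prod_pos fun _ hk => wt_pos hφ ht (le_sub_mul_of_lt ht (Finset.mem_range.mp hk) hx)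

lemma wtProd_continuousOn (hφ : IsSymbol φ) (ht : 0 ≤ t) (i : ℕ) :
    ContinuousOn (wtProd φ t i) (Ici (i * t)) :=
  continuousOn_finsetProd _ fun _ hk =>
    (wt_continuousOn hφ ht).comp (continuous_sub_right _).continuousOn
      fun _ hx => le_sub_mul_of_lt ht (Finset.mem_range.mp hk) hx

lemma wtProd_succ (i : ℕ) (x : ℝ) :
    wtProd φ t (i + 1) x = wtProd φ t i (x - t) * wt φ t x := by
  rw [wtProd, Finset.prod_range_succ']
  congr 1
  · exact Finset.prod_congr rfl fun k _ => by push_cast; ring_nf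
  · simp

end Weights

section WeightedTranslation

variable {φ : ℝ → ℝ} {t : ℝ} {S : H →L[ℂ] H}

lemma IsWT.pow_apply (hS : IsWT φ t S) (ht : 0 ≤ t) (i : ℕ) (g : H) :
    ∀ᵐ x ∂mu, ((S ^ i) g : ℝ → ℂ) x =
      if (i : ℝ) * t ≤ x then (wtProd φ t i x : ℂ) * (g : ℝ → ℂ) (x - i * t) else 0 := by
  induction i with
  | zero =>
    filter_upwards [ae_nonneg_mu] with x hx
    simp [wtProd, hx]
  | succ i ih =>
    filter_upwards [hS.eval ((S ^ i) g), ae_sub_of_ae ht ih] with x hSx hprev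
    rw [pow_succ', mul_apply_eq_comp, hSx]
    by_cases hx : ((i + 1 : ℕ) : ℝ) * t ≤ x
    · have hxt : t ≤ x := le_trans (le_mul_of_one_le_left ht (by simp)) hx
      have hxi : (i : ℝ) * t ≤ x - t := by push_cast at hx; linarith
      have harg : x - t - i * t = x - ((i + 1 : ℕ) : ℝ) * t := by push_cast; ring
      rw [if_pos hxt, hprev hxt, if_pos hxi, if_pos hx, wtProd_succ, harg]
      push_cast
      ring
    · have hxi : ¬ (i : ℝ) * t ≤ x - t := by push_cast at hx; linarith
      rw [if_neg hx]
      split_ifs with hxt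
      · rw [hprev hxt, if_neg hxi, mul_zero]
      · rfl

lemma IsWT.adjoint_pow_apply_eq_zero_of_ae (hS : IsWT φ t S) (ht : 0 ≤ t) {i : ℕ} {f : H}
    (hf : ∀ᵐ x ∂mu, (i : ℝ) * t ≤ x → (f : ℝ → ℂ) x = 0) :
    (adjoint S ^ i) f = 0 := by
  rw [← adjoint_pow, ← inner_self_eq_zero (𝕜 := ℂ), adjoint_inner_left]
  refine L2.inner_eq_zero_of_ae_eq_zero_or ?_
  filter_upwards [hS.pow_apply ht i (adjoint (S ^ i) f), hf] with x hSx hfx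
  by_cases hx : (i : ℝ) * t ≤ x
  · exact .inl (hfx hx)
  · exact .inr (by rw [hSx, if_neg hx])

lemma IsWT.ae_eq_zero_of_adjoint_pow_apply_eq_zero (hS : IsWT φ t S) (hφ : IsSymbol φ)
    (ht : 0 ≤ t) {i : ℕ} {f : H} (h : (adjoint S ^ i) f = 0) :
    ∀ᵐ x ∂mu, (i : ℝ) * t ≤ x → (f : ℝ → ℂ) x = 0 := by
  set c := (i : ℝ) * t
  set W := wtProd φ t i
  have hc : 0 ≤ c := by positivity
  have hW : ∀ x ∈ Ici c, 0 < W x := fun x hx => wtProd_pos hφ ht i hx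
  -- `W` need not be bounded, so test `f` against `S ^ i g` for `g = (W / (1 + W) · f)(· + c)`:
  -- then `⟪f, S ^ i g⟫ = ∫_{x ≥ c} W² / (1 + W) |f|²`.
  obtain ⟨g, hg⟩ := exists_Lp_eq_mul_comp_add_const hc (ρ := fun x => W x / (1 + W x)) (C := 1)
    ((wtProd_continuousOn hφ ht i).div (continuousOn_const.add (wtProd_continuousOn hφ ht i))
      fun x hx => by linarith [hW x hx])
    (fun x hx => by
      rw [abs_of_pos (by have := hW x hx; positivity), div_le_one (by linarith [hW x hx])]
      linarith) f
  set w : ℝ → ℝ := (Ici c).indicator fun x => W x * (W x / (1 + W x)) with hw_def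
  have hSg : (S ^ i) g =ᵐ[mu] fun x => (w x : ℂ) * f x := by
    filter_upwards [hS.pow_apply ht i g, ae_sub_of_ae hc hg] with x hSx hgx
    by_cases hx : c ≤ x
    · rw [hSx, if_pos hx, hgx hx, hw_def, indicator_of_mem (mem_Ici.mpr hx), sub_add_cancel]
      push_cast
      ring
    · rw [hSx, if_neg hx, hw_def, indicator_of_notMem (notMem_Ici.mpr (not_le.mp hx))]
      simp
  have hfg : inner ℂ f ((S ^ i) g) = 0 := by
    rw [← adjoint_inner_left, adjoint_pow, h, inner_zero_left]
  have hw : ∀ x, 0 ≤ w x :=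
    indicator_nonneg fun x hx => by have := hW x hx; positivity
  filter_upwards [L2.ae_eq_zero_of_inner_eq_zero_of_ae_eq_mul hw hSg hfg] with x hx hcx
  refine hx ?_
  rw [hw_def, indicator_of_mem (mem_Ici.mpr hcx)]
  have := hW x hcx
  positivity

lemma IsWT.adjoint_pow_apply_eq_zero_iff (hS : IsWT φ t S) (hφ : IsSymbol φ) (ht : 0 ≤ t)
    (i : ℕ) (f : H) :
    (adjoint S ^ i) f = 0 ↔ ∀ᵐ x ∂mu, (i : ℝ) * t ≤ x → (f : ℝ → ℂ) x = 0 :=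
  ⟨hS.ae_eq_zero_of_adjoint_pow_apply_eq_zero hφ ht, hS.adjoint_pow_apply_eq_zero_of_ae ht⟩

end WeightedTranslation

theorem statement_15_general {d : ℕ} (φ : Fin d → ℝ → ℝ) (t : Fin d → ℝ)
    (S : Fin d → (H →L[ℂ] H))
    (hφ : ∀ i, IsSymbol (φ i)) (ht : ∀ i, 0 < t i)
    (hS : ∀ i, IsWT (φ i) (t i) (S i))
    (tr : ℝ) (htr : IsLeast (Set.range t) tr) :
    (∀ (i : ℕ) (f : H),
      (∀ j, (ContinuousLinearMap.adjoint (S j) ^ i) f = 0) ↔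
        ∀ᵐ x ∂mu, (i : ℝ) * tr ≤ x → (f : ℝ → ℂ) x = 0) ∧
    Dense {f : H | ∃ i : ℕ, ∀ j, (ContinuousLinearMap.adjoint (S j) ^ i) f = 0} := by
  obtain ⟨j₀, rfl⟩ := htr.1
  have hker : ∀ (i : ℕ) (f : H), (∀ j, (adjoint (S j) ^ i) f = 0) ↔
      ∀ᵐ x ∂mu, (i : ℝ) * t j₀ ≤ x → (f : ℝ → ℂ) x = 0 := by
    refine fun i f => ⟨fun h => ((hS j₀).adjoint_pow_apply_eq_zero_iff (hφ j₀) (ht j₀).le i f).mp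
      (h j₀), fun h j => ((hS j).adjoint_pow_apply_eq_zero_iff (hφ j) (ht j).le i f).mpr ?_⟩
    filter_upwards [h] with x hx hjx
    exact hx (le_trans (by gcongr; exact htr.2 ⟨j, rfl⟩) hjx)
  refine ⟨hker, fun f => mem_closure_of_tendsto
    (Lp.tendsto_indicator_Iio_atTop ENNReal.ofNat_ne_top f) (Eventually.of_forall fun a => ?_)⟩
  refine ⟨⌈a / t j₀⌉₊, (hker _ _).mpr ?_⟩
  filter_upwards [((Lp.memLp f).indicator measurableSet_Iio).coeFn_toLp] with x hx hax
  have ha : a ≤ x := ((div_le_iff₀ (ht j₀)).mp (Nat.le_ceil _)).trans hax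
  rw [hx, indicator_of_notMem (notMem_Iio.mpr ha)]

/-- for each `i ∈ ℕ` the joint kernel `⋂_j ker (S_{j,t_j}*)^i` equals
`{f : f = 0 a.e. on [i·t_r, ∞)}`, where `t_r = min{t₁, …, t_d}`, and the union of these
joint kernels over `i ∈ ℕ` is dense in `L²(ℝ₊)`. -/
theorem statement_15 {d : ℕ} (φ : Fin d → ℝ → ℝ) (t : Fin d → ℝ)
    (S : Fin d → (H →L[ℂ] H))
    (hφ : ∀ i, IsSymbol (φ i)) (ht : ∀ i, 0 < t i)
    (hS : ∀ i, IsWT (φ i) (t i) (S i))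
    (hcomm : ∀ i j, S i * S j = S j * S i)
    (tr : ℝ) (htr : IsLeast (Set.range t) tr) :
    (∀ (i : ℕ) (f : H),
      (∀ j, (ContinuousLinearMap.adjoint (S j) ^ i) f = 0) ↔
        ∀ᵐ x ∂mu, (i : ℝ) * tr ≤ x → (f : ℝ → ℂ) x = 0) ∧
    Dense {f : H | ∃ i : ℕ, ∀ j, (ContinuousLinearMap.adjoint (S j) ^ i) f = 0} :=
  statement_15_general φ t S hφ ht hS tr htr

end WTS
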